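/- Let y ∈ ℝ₊^{2m+1} have strictly positive components, let x⁰ ∈ ℝ^{m+1} be strictly positive, and define the iterates x^{t+1} = T(x^t) for t ≥ 0. If x^∞ ∈ ℝ^{m+1} is strictly positive and is a limit point of the sequence (x^t) (i.e., a limit along some subsequence), then x^∞ is a fixed point of the algorithm: T(x^∞) = x^∞. -/

import Mathlib

open Finset Filter

/-- Extension of `x : Fin (m+1) → ℝ` to `ℕ`, zero outside `[0, m]`. -/
def ext (m : ℕ) (x : Fin (m + 1) → ℝ) (k : ℕ) : ℝ :=
  if h : k < m + 1 then x ⟨k, h⟩ else 0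

/-- Autoconvolution `(x*x)_i = ∑_{j=0}^{i} x_{i-j} x_j`. -/
def aconv (m : ℕ) (x : Fin (m + 1) → ℝ) : Fin (2 * m + 1) → ℝ :=
  fun i => ∑ j ∈ Finset.range (i.1 + 1), ext m x (i.1 - j) * ext m x j

/-- The index `ℓ + j ∈ {0,…,2m}` for `ℓ, j ∈ {0,…,m}`. -/
def idx (m : ℕ) (ℓ j : Fin (m + 1)) : Fin (2 * m + 1) :=
  ⟨ℓ.1 + j.1, by have h1 := ℓ.isLt; have h2 := j.isLt; omega⟩

/-- One term of the I-divergence, with values in `[0,∞]`, with the conventions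
`0·log(0/b) = 0` and value `∞` if `a > 0 = b`. -/
noncomputable def termDiv (a b : ℝ) : ENNReal :=
  if a = 0 then ENNReal.ofReal b
  else if b = 0 then ⊤
  else ENNReal.ofReal (a * Real.log (a / b) - a + b)

/-- `[0,∞]`-valued I-divergence between vectors. -/
noncomputable def Idiv {n : ℕ} (u v : Fin n → ℝ) : ENNReal :=
  ∑ i, termDiv (u i) (v i)

/-- Real-valued I-divergence between vectors (used when the second argument is
positive wherever the first one is). -/
noncomputable def IdivR {n : ℕ} (u v : Fin n → ℝ) : ℝ :=
  ∑ i, (u i * Real.log (u i / v i) - u i + v i)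

/-- `[0,∞]`-valued I-divergence between `(2m+1) × (m+1)` matrices. -/
noncomputable def IdivM (m : ℕ) (M N : Fin (2 * m + 1) → Fin (m + 1) → ℝ) : ENNReal :=
  ∑ i, ∑ j, termDiv (M i j) (N i j)

/-- Real-valued I-divergence between `(2m+1) × (m+1)` matrices. -/
noncomputable def IdivMR (m : ℕ) (M N : Fin (2 * m + 1) → Fin (m + 1) → ℝ) : ℝ :=
  ∑ i, ∑ j, (M i j * Real.log (M i j / N i j) - M i j + N i j)

/-- The set 𝒴: nonnegative matrices supported on `{(i,j) : j ≤ i ≤ j+m}` with row sums `y`. -/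
def calY (m : ℕ) (y : Fin (2 * m + 1) → ℝ) (Y : Fin (2 * m + 1) → Fin (m + 1) → ℝ) : Prop :=
  (∀ i j, 0 ≤ Y i j) ∧
  (∀ (i : Fin (2 * m + 1)) (j : Fin (m + 1)), ¬(j.1 ≤ i.1 ∧ i.1 ≤ j.1 + m) → Y i j = 0) ∧
  (∀ i, ∑ j, Y i j = y i)

/-- The matrix `W(x)` with `W(x)_{ij} = x_{i-j} x_j` on the support and `0` elsewhere. -/
def Wmat (m : ℕ) (x : Fin (m + 1) → ℝ) (i : Fin (2 * m + 1)) (j : Fin (m + 1)) : ℝ :=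
  if h : j.1 ≤ i.1 ∧ i.1 ≤ j.1 + m then x ⟨i.1 - j.1, by omega⟩ * x j else 0

/-- The matrix `Y*(x)` with `Y*(x)_{ij} = (x_{i-j} x_j/(x*x)_i)·y_i` on the support. -/
noncomputable def Ystar (m : ℕ) (y : Fin (2 * m + 1) → ℝ) (x : Fin (m + 1) → ℝ)
    (i : Fin (2 * m + 1)) (j : Fin (m + 1)) : ℝ :=
  if h : j.1 ≤ i.1 ∧ i.1 ≤ j.1 + m then
    x ⟨i.1 - j.1, by omega⟩ * x j / aconv m x i * y i
  else 0

/-- `Ŷ_j = ∑_{i=0}^{m} Y_{i+j,i} + ∑_{i=j}^{j+m} Y_{ij}`. -/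
def Yhat (m : ℕ) (Y : Fin (2 * m + 1) → Fin (m + 1) → ℝ) (j : Fin (m + 1)) : ℝ :=
  (∑ ℓ : Fin (m + 1), Y (idx m ℓ j) ℓ) + ∑ ℓ : Fin (m + 1), Y (idx m ℓ j) j

/-- The algorithm map `T(x)_j = x_j (1/c) ∑_ℓ x_ℓ y_{ℓ+j}/(x*x)_{ℓ+j}`,
with `c = √(∑ y_i)`. -/
noncomputable def Tmap (m : ℕ) (y : Fin (2 * m + 1) → ℝ) (x : Fin (m + 1) → ℝ)
    (j : Fin (m + 1)) : ℝ :=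
  x j * (1 / Real.sqrt (∑ i, y i)) * ∑ ℓ, x ℓ * y (idx m ℓ j) / aconv m x (idx m ℓ j)

/-- The gradient `∇_j I(x) = 2 ∑_ℓ ( x_ℓ − x_ℓ y_{ℓ+j}/(x*x)_{ℓ+j} )`. -/
noncomputable def gradI (m : ℕ) (y : Fin (2 * m + 1) → ℝ) (x : Fin (m + 1) → ℝ)
    (j : Fin (m + 1)) : ℝ :=
  2 * ∑ ℓ, (x ℓ - x ℓ * y (idx m ℓ j) / aconv m x (idx m ℓ j))

/-!
The I-divergence `f x = I(y ‖ x * x)` is a Lyapunov function for `T`. The log-sum inequality on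
each antidiagonal `ℓ + j = i` of `x ⊗ x`, weighted by `y_i / (x * x)_i`, gives
`2c · I(T x ‖ x) + (∑ x - c)² ≤ f x - f (T x)`, with `c = √(∑ y)` the total mass of `T x`.
Hence `f` decreases along the iterates; at a positive limit point `x∞`, continuity of `f` and `T`
forces `f (T x∞) = f x∞`, so `I(T x∞ ‖ x∞) = 0`, i.e. `T x∞ = x∞`.
-/

open Real InformationTheory Topology

/-- The log-sum inequality. -/
lemma sum_mul_log_div_le {ι : Type*} (s : Finset ι) {w w' : ι → ℝ} (hw : ∀ i ∈ s, 0 < w i)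
    (hw' : ∀ i ∈ s, 0 < w' i) :
    ∑ i ∈ s, w i * log (w' i / w i) ≤ (∑ i ∈ s, w i) * log ((∑ i ∈ s, w' i) / ∑ i ∈ s, w i) := by
  rcases s.eq_empty_or_nonempty with rfl | hs
  · simp
  have hW : 0 < ∑ i ∈ s, w i := sum_pos hw hs
  have jensen := strictConcaveOn_log_Ioi.concaveOn.le_map_sum (t := s)
    (w := fun i => w i / ∑ i ∈ s, w i) (p := fun i => w' i / w i) (fun i hi => (div_pos (hw i hi) hW).le)
    (by rw [← sum_div, div_self hW.ne']) (fun i hi => div_pos (hw' i hi) (hw i hi))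
  have hmean : ∑ i ∈ s, (w i / ∑ i ∈ s, w i) • (w' i / w i) = (∑ i ∈ s, w' i) / ∑ i ∈ s, w i := by
    rw [sum_div]
    refine sum_congr rfl fun i hi => ?_
    simp only [smul_eq_mul]
    field_simp [(hw i hi).ne']
  rw [hmean] at jensen
  calc ∑ i ∈ s, w i * log (w' i / w i)
      = (∑ i ∈ s, w i) * ∑ i ∈ s, (w i / ∑ i ∈ s, w i) • log (w' i / w i) := by
        rw [mul_sum]
        refine sum_congr rfl fun i _ => ?_
        simp only [smul_eq_mul]
        field_simp
    _ ≤ _ := mul_le_mul_of_nonneg_left jensen hW.le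

lemma sum_sum_mul_add_of_symm {ι : Type*} [Fintype ι] {K : ι → ι → ℝ} (hK : ∀ a b, K a b = K b a)
    (L : ι → ℝ) : ∑ a, ∑ b, K a b * (L a + L b) = 2 * ∑ b, (∑ a, K a b) * L b := by
  have hswap : ∑ a, ∑ b, K a b * L a = ∑ a, ∑ b, K b a * L a :=
    sum_congr rfl fun a _ => sum_congr rfl fun b _ => by rw [hK]
  simp only [mul_add, sum_add_distrib, hswap, sum_mul]
  rw [sum_comm (f := fun a b => K a b * L b)]
  ring

section IdivR

variable {n : ℕ} {u v v' : Fin n → ℝ}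

lemma mul_log_div_sub_add_eq_mul_klFun (a : ℝ) {b : ℝ} (hb : b ≠ 0) :
    a * log (a / b) - a + b = b * klFun (a / b) := by
  rw [klFun]; field_simp; ring

lemma IdivR_nonneg (hu : ∀ i, 0 ≤ u i) (hv : ∀ i, 0 < v i) : 0 ≤ IdivR u v :=
  sum_nonneg fun i _ => by
    rw [mul_log_div_sub_add_eq_mul_klFun _ (hv i).ne']
    exact mul_nonneg (hv i).le (klFun_nonneg (div_nonneg (hu i) (hv i).le))

lemma IdivR_eq_zero_iff (hu : ∀ i, 0 ≤ u i) (hv : ∀ i, 0 < v i) : IdivR u v = 0 ↔ u = v := by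
  have hterm (i : Fin n) : u i * log (u i / v i) - u i + v i = v i * klFun (u i / v i) :=
    mul_log_div_sub_add_eq_mul_klFun _ (hv i).ne'
  have hnn (i : Fin n) : 0 ≤ v i * klFun (u i / v i) :=
    mul_nonneg (hv i).le (klFun_nonneg (div_nonneg (hu i) (hv i).le))
  simp only [IdivR, hterm, sum_eq_zero_iff_of_nonneg fun i _ => hnn i, mem_univ, true_implies,
    mul_eq_zero, (hv _).ne', false_or, klFun_eq_zero_iff (div_nonneg (hu _) (hv _).le),
    div_eq_one_iff_eq (hv _).ne', funext_iff]

lemma IdivR_eq_sum_mul_log_sub_add (u v : Fin n → ℝ) :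
    IdivR u v = ∑ i, u i * log (u i / v i) - ∑ i, u i + ∑ i, v i := by
  rw [IdivR, sum_add_distrib, sum_sub_distrib]

lemma IdivR_sub_IdivR (hu : ∀ i, 0 < u i) (hv : ∀ i, 0 < v i) (hv' : ∀ i, 0 < v' i) :
    IdivR u v - IdivR u v' = ∑ i, u i * log (v' i / v i) + ∑ i, v i - ∑ i, v' i := by
  have hlog : ∑ i, u i * log (u i / v i) - ∑ i, u i * log (u i / v' i) =
      ∑ i, u i * log (v' i / v i) := by
    rw [← sum_sub_distrib]
    refine sum_congr rfl fun i _ => ?_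
    rw [log_div (hu i).ne' (hv i).ne', log_div (hu i).ne' (hv' i).ne',
      log_div (hv' i).ne' (hv i).ne']
    ring
  rw [IdivR_eq_sum_mul_log_sub_add, IdivR_eq_sum_mul_log_sub_add, ← hlog]
  ring

lemma continuousAt_IdivR (hu : ∀ i, 0 < u i) (hv : ∀ i, 0 < v i) : ContinuousAt (IdivR u) v := by
  refine tendsto_finsetSum _ fun i _ => ?_
  have hvi : ContinuousAt (fun v : Fin n → ℝ => v i) v := (continuous_apply i).continuousAt
  exact ((continuousAt_const.mul ((continuousAt_const.div hvi (hv i).ne').log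
    (div_pos (hu i) (hv i)).ne')).sub continuousAt_const).add hvi

end IdivR

lemma apply_map_eq_of_tendsto_subseq {X : Type*} [TopologicalSpace X] {f : X → ℝ} {T : X → X}
    {u : ℕ → X} (hu : ∀ t, u (t + 1) = T (u t)) (hf_anti : Antitone (f ∘ u)) {φ : ℕ → ℕ}
    (hφ : StrictMono φ) {a : X} (ha : Tendsto (u ∘ φ) atTop (𝓝 a)) (hT : ContinuousAt T a)
    (hf : ContinuousAt f a) (hfT : ContinuousAt f (T a)) : f (T a) = f a := by
  have hlim : Tendsto (f ∘ u ∘ φ) atTop (𝓝 (f a)) := hf.tendsto.comp ha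
  -- `f (u (φ k + 1))` is squeezed between `f (u (φ (k + 1)))` and `f (u (φ k))`.
  have hsucc : Tendsto (fun k => f (u (φ k + 1))) atTop (𝓝 (f a)) :=
    tendsto_of_tendsto_of_tendsto_of_le_of_le (hlim.comp (tendsto_add_atTop_nat 1)) hlim
      (fun k => hf_anti (hφ (lt_add_one k))) (fun k => hf_anti (Nat.le_succ _))
  have hmap : Tendsto (fun k => f (u (φ k + 1))) atTop (𝓝 (f (T a))) := by
    simp only [hu]
    exact hfT.tendsto.comp (hT.tendsto.comp ha)
  exact tendsto_nhds_unique hmap hsucc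

lemma aconv_eq_sum_filter_idx (m : ℕ) (x : Fin (m + 1) → ℝ) (i : Fin (2 * m + 1)) :
    aconv m x i = ∑ p : Fin (m + 1) × Fin (m + 1) with idx m p.1 p.2 = i, x p.1 * x p.2 := by
  symm
  refine Finset.sum_bij_ne_zero (fun p _ _ => p.2.1) ?_ ?_ ?_ ?_
  · rintro ⟨ℓ, j⟩ hp -
    simp only [mem_filter, mem_univ, true_and, idx, Fin.ext_iff] at hp
    simp only [mem_range]; omega
  · rintro ⟨ℓ, j⟩ hp - ⟨ℓ', j'⟩ hp' - (h : j.1 = j'.1)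
    simp only [mem_filter, mem_univ, true_and, idx, Fin.ext_iff] at hp hp'
    simp only [Prod.ext_iff, Fin.ext_iff]; omega
  · intro k hk hne
    have hk' : k < m + 1 := by by_contra h; simp [_root_.ext, h] at hne
    have hik : i.1 - k < m + 1 := by by_contra h; simp [_root_.ext, h] at hne
    refine ⟨(⟨i.1 - k, hik⟩, ⟨k, hk'⟩), ?_, ?_, rfl⟩
    · simp only [mem_filter, mem_univ, true_and, idx, Fin.ext_iff]
      simp only [mem_range] at hk; omega
    · simpa [_root_.ext, hk', hik] using hne
  · rintro ⟨ℓ, j⟩ hp -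
    simp only [mem_filter, mem_univ, true_and, idx, Fin.ext_iff] at hp
    have hℓ : i.1 - j.1 = ℓ.1 := by omega
    simp [_root_.ext, hℓ, Fin.is_le]

lemma sum_sum_filter_idx (m : ℕ) (F : Fin (m + 1) → Fin (m + 1) → ℝ) :
    ∑ i, ∑ p : Fin (m + 1) × Fin (m + 1) with idx m p.1 p.2 = i, F p.1 p.2 = ∑ ℓ, ∑ j, F ℓ j := by
  rw [sum_fiberwise, ← univ_product_univ, sum_product]

lemma sum_mul_aconv (m : ℕ) (x : Fin (m + 1) → ℝ) (g : Fin (2 * m + 1) → ℝ) :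
    ∑ i, g i * aconv m x i = ∑ ℓ, ∑ j, g (idx m ℓ j) * (x ℓ * x j) := by
  simp_rw [aconv_eq_sum_filter_idx, mul_sum]
  rw [← sum_sum_filter_idx]
  exact sum_congr rfl fun i _ => sum_congr rfl fun p hp => by rw [(mem_filter.1 hp).2]

lemma sum_aconv (m : ℕ) (x : Fin (m + 1) → ℝ) : ∑ i, aconv m x i = (∑ j, x j) ^ 2 := by
  simpa [sq, sum_mul_sum] using sum_mul_aconv m x 1

lemma aconv_pos {m : ℕ} {x : Fin (m + 1) → ℝ} (hx : ∀ j, 0 < x j) (i : Fin (2 * m + 1)) :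
    0 < aconv m x i := by
  rw [aconv_eq_sum_filter_idx]
  refine sum_pos (fun p _ => mul_pos (hx _) (hx _))
    ⟨(⟨i.1 - min i.1 m, by omega⟩, ⟨min i.1 m, by omega⟩), ?_⟩
  simp only [mem_filter, mem_univ, true_and, idx, Fin.ext_iff]; omega

lemma idx_comm (m : ℕ) (ℓ j : Fin (m + 1)) : idx m ℓ j = idx m j ℓ := by
  simp only [idx, Fin.ext_iff]; omega

lemma continuous_aconv (m : ℕ) : Continuous (aconv m) := by
  refine continuous_pi fun i => continuous_finsetSum _ fun k _ => ?_
  unfold _root_.ext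
  split_ifs <;> fun_prop

section Tmap

variable {m : ℕ} {y : Fin (2 * m + 1) → ℝ} {x : Fin (m + 1) → ℝ}

lemma sqrt_sum_pos (hy : ∀ i, 0 < y i) : 0 < √(∑ i, y i) :=
  Real.sqrt_pos.2 (sum_pos (fun i _ => hy i) univ_nonempty)

lemma sqrt_mul_Tmap (hy : ∀ i, 0 < y i) (j : Fin (m + 1)) :
    √(∑ i, y i) * Tmap m y x j =
      ∑ ℓ, y (idx m ℓ j) / aconv m x (idx m ℓ j) * (x ℓ * x j) := by
  have hc := (sqrt_sum_pos hy).ne'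
  rw [Tmap, mul_sum, mul_sum]
  refine sum_congr rfl fun ℓ _ => ?_
  field_simp

lemma sum_Tmap (hy : ∀ i, 0 < y i) (hx : ∀ j, 0 < x j) : ∑ j, Tmap m y x j = √(∑ i, y i) := by
  have hc := sqrt_sum_pos hy
  have hmul : √(∑ i, y i) * ∑ j, Tmap m y x j = √(∑ i, y i) * √(∑ i, y i) := by
    calc √(∑ i, y i) * ∑ j, Tmap m y x j
        = ∑ j, ∑ ℓ, y (idx m ℓ j) / aconv m x (idx m ℓ j) * (x ℓ * x j) := by
          rw [mul_sum]; exact sum_congr rfl fun j _ => sqrt_mul_Tmap hy j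
      _ = ∑ i, y i / aconv m x i * aconv m x i := by rw [sum_comm, sum_mul_aconv]
      _ = √(∑ i, y i) * √(∑ i, y i) := by
          rw [Real.mul_self_sqrt (sum_nonneg fun i _ => (hy i).le)]
          exact sum_congr rfl fun i _ => div_mul_cancel₀ _ (aconv_pos hx i).ne'
  exact mul_left_cancel₀ hc.ne' hmul

lemma Tmap_pos (hy : ∀ i, 0 < y i) (hx : ∀ j, 0 < x j) (j : Fin (m + 1)) : 0 < Tmap m y x j := by
  have hc := sqrt_sum_pos hy
  refine mul_pos (mul_pos (hx j) (one_div_pos.2 hc)) (sum_pos (fun ℓ _ => ?_) univ_nonempty)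
  exact div_pos (mul_pos (hx ℓ) (hy _)) (aconv_pos hx _)

lemma continuousAt_Tmap (hx : ∀ j, 0 < x j) : ContinuousAt (Tmap m y) x := by
  have hA (i : Fin (2 * m + 1)) : Continuous fun x => aconv m x i :=
    (continuous_apply i).comp (continuous_aconv m)
  refine continuousAt_pi.2 fun j => ((continuous_apply j).continuousAt.mul continuousAt_const).mul
    (tendsto_finsetSum _ fun ℓ _ => ?_)
  exact ((continuous_apply ℓ).continuousAt.mul continuousAt_const).div (hA _).continuousAt
    (aconv_pos hx _).ne'

end Tmap

section Lyapunov

variable {m : ℕ} {y : Fin (2 * m + 1) → ℝ} {x : Fin (m + 1) → ℝ}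

lemma two_mul_sqrt_mul_sum_Tmap_mul_log_le (hy : ∀ i, 0 < y i) (hx : ∀ j, 0 < x j) :
    2 * √(∑ i, y i) * ∑ j, Tmap m y x j * log (Tmap m y x j / x j) ≤
      ∑ i, y i * log (aconv m (Tmap m y x) i / aconv m x i) := by
  set x' := Tmap m y x
  have hx' : ∀ j, 0 < x' j := Tmap_pos hy hx
  set g : Fin (2 * m + 1) → ℝ := fun i => y i / aconv m x i
  set L : Fin (m + 1) → ℝ := fun j => log (x' j / x j)
  have hfiber (i : Fin (2 * m + 1)) :
      ∑ p : Fin (m + 1) × Fin (m + 1) with idx m p.1 p.2 = i,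
          g (idx m p.1 p.2) * (x p.1 * x p.2) * (L p.1 + L p.2) ≤
        y i * log (aconv m x' i / aconv m x i) := by
    have hlogsum := sum_mul_log_div_le {p : Fin (m + 1) × Fin (m + 1) | idx m p.1 p.2 = i}
      (w := fun p => x p.1 * x p.2) (w' := fun p => x' p.1 * x' p.2)
      (fun p _ => mul_pos (hx _) (hx _)) (fun p _ => mul_pos (hx' _) (hx' _))
    rw [← aconv_eq_sum_filter_idx, ← aconv_eq_sum_filter_idx] at hlogsum
    calc _ = g i * ∑ p : Fin (m + 1) × Fin (m + 1) with idx m p.1 p.2 = i,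
            x p.1 * x p.2 * log (x' p.1 * x' p.2 / (x p.1 * x p.2)) := by
          rw [mul_sum]
          refine sum_congr rfl fun p hp => ?_
          rw [(mem_filter.1 hp).2, mul_div_mul_comm, log_mul (div_pos (hx' _) (hx _)).ne'
            (div_pos (hx' _) (hx _)).ne']
          ring
      _ ≤ g i * (aconv m x i * log (aconv m x' i / aconv m x i)) :=
          mul_le_mul_of_nonneg_left hlogsum (div_pos (hy i) (aconv_pos hx i)).le
      _ = y i * log (aconv m x' i / aconv m x i) := by
          rw [← mul_assoc, div_mul_cancel₀ _ (aconv_pos hx i).ne']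
  calc 2 * √(∑ i, y i) * ∑ j, x' j * L j
      = ∑ ℓ, ∑ j, g (idx m ℓ j) * (x ℓ * x j) * (L ℓ + L j) := by
        rw [sum_sum_mul_add_of_symm (fun ℓ j => by rw [idx_comm]; ring), mul_assoc, mul_sum]
        exact congrArg (2 * ·) (sum_congr rfl fun j _ => by rw [← mul_assoc, sqrt_mul_Tmap hy j])
    _ = ∑ i, ∑ p : Fin (m + 1) × Fin (m + 1) with idx m p.1 p.2 = i,
          g (idx m p.1 p.2) * (x p.1 * x p.2) * (L p.1 + L p.2) :=
        (sum_sum_filter_idx m fun ℓ j => g (idx m ℓ j) * (x ℓ * x j) * (L ℓ + L j)).symm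
    _ ≤ _ := sum_le_sum fun i _ => hfiber i

lemma two_mul_sqrt_mul_IdivR_Tmap_add_sq_le (hy : ∀ i, 0 < y i) (hx : ∀ j, 0 < x j) :
    2 * √(∑ i, y i) * IdivR (Tmap m y x) x + (∑ j, x j - √(∑ i, y i)) ^ 2 ≤
      IdivR y (aconv m x) - IdivR y (aconv m (Tmap m y x)) := by
  have hjensen := two_mul_sqrt_mul_sum_Tmap_mul_log_le hy hx
  rw [IdivR_sub_IdivR hy (aconv_pos hx) (aconv_pos (Tmap_pos hy hx)), sum_aconv, sum_aconv,
    IdivR_eq_sum_mul_log_sub_add, sum_Tmap hy hx]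
  linear_combination hjensen

lemma IdivR_aconv_Tmap_le (hy : ∀ i, 0 < y i) (hx : ∀ j, 0 < x j) :
    IdivR y (aconv m (Tmap m y x)) ≤ IdivR y (aconv m x) := by
  have hdecr := two_mul_sqrt_mul_IdivR_Tmap_add_sq_le hy hx
  have hD := IdivR_nonneg (fun j => (Tmap_pos hy hx j).le) hx
  have hc := sqrt_sum_pos hy
  nlinarith [sq_nonneg (∑ j, x j - √(∑ i, y i))]

lemma Tmap_eq_of_IdivR_aconv_Tmap_eq (hy : ∀ i, 0 < y i) (hx : ∀ j, 0 < x j)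
    (h : IdivR y (aconv m (Tmap m y x)) = IdivR y (aconv m x)) : Tmap m y x = x := by
  have hdecr := two_mul_sqrt_mul_IdivR_Tmap_add_sq_le hy hx
  rw [h, sub_self] at hdecr
  have hD := IdivR_nonneg (fun j => (Tmap_pos hy hx j).le) hx
  have hc := sqrt_sum_pos hy
  refine (IdivR_eq_zero_iff (fun j => (Tmap_pos hy hx j).le) hx).1 (le_antisymm ?_ hD)
  nlinarith [sq_nonneg (∑ j, x j - √(∑ i, y i))]

end Lyapunov

/-- a strictly positive limit point of the iterates is a fixed
point of the algorithm. -/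
theorem stmt16 (m : ℕ) (y : Fin (2 * m + 1) → ℝ) (hy : ∀ i, 0 < y i)
    (xs : ℕ → Fin (m + 1) → ℝ) (h0 : ∀ j, 0 < xs 0 j)
    (hstep : ∀ t, xs (t + 1) = Tmap m y (xs t))
    (xinf : Fin (m + 1) → ℝ) (hpos : ∀ j, 0 < xinf j)
    (hlim : ∃ φ : ℕ → ℕ, StrictMono φ ∧
      Filter.Tendsto (fun k => xs (φ k)) Filter.atTop (nhds xinf)) :
    Tmap m y xinf = xinf := by
  obtain ⟨φ, hφ, hconv⟩ := hlim
  have hxs (t : ℕ) : ∀ j, 0 < xs t j := by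
    induction t with
    | zero => exact h0
    | succ t ih => rw [hstep t]; exact Tmap_pos hy ih
  have hcont {x : Fin (m + 1) → ℝ} (hx : ∀ j, 0 < x j) :
      ContinuousAt (fun x => IdivR y (aconv m x)) x :=
    (continuousAt_IdivR hy (aconv_pos hx)).comp (continuous_aconv m).continuousAt
  refine Tmap_eq_of_IdivR_aconv_Tmap_eq hy hpos (apply_map_eq_of_tendsto_subseq hstep ?_ hφ hconv
    (continuousAt_Tmap hpos) (hcont hpos) (hcont (Tmap_pos hy hpos)))
  exact antitone_nat_of_succ_le fun t => by
    simp only [Function.comp_apply, hstep t]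
    exact IdivR_aconv_Tmap_le hy (hxs t)
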